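/- Let Σ = (G, σ) be a signed graph with connected underlying simple graph G and let w be a positive real-valued weight function on the edges. Then Σ is balanced if and only if the largest eigenvalue of the adjacency matrix A(Σ,w) (with entries σ(uv)·w(uv) on edges, 0 elsewhere) equals the largest eigenvalue of A(G,w) (with entries w(uv) on edges, 0 elsewhere). -/

import Mathlib

open SimpleGraph

/-- The sign (product of edge signs) of a walk in a graph, computed along its darts. -/
def walkSign {V : Type*} {G : SimpleGraph V} (σ : V → V → ℤ) {u v : V} (p : G.Walk u v) : ℤ :=
  (p.darts.map fun d => σ d.toProd.1 d.toProd.2).prod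

/-- `σ` is a signature on `G`: a symmetric function that is `±1`-valued on edges. -/
def IsSignature {V : Type*} (G : SimpleGraph V) (σ : V → V → ℤ) : Prop :=
  (∀ u v, σ u v = σ v u) ∧ ∀ u v, G.Adj u v → σ u v = 1 ∨ σ u v = -1

/-- A signed graph is balanced when every cycle has sign `+1`. -/
def IsBalanced {V : Type*} (G : SimpleGraph V) (σ : V → V → ℤ) : Prop :=
  ∀ (u : V) (p : G.Walk u u), p.IsCycle → walkSign σ p = 1

/-- A walk is a shortest path when it is a path whose length is the graph distance
between its endpoints. -/
def IsShortestPath {V : Type*} {G : SimpleGraph V} {u v : V} (p : G.Walk u v) : Prop :=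
  p.IsPath ∧ p.length = G.dist u v

open scoped Classical in
/-- `σmax u v = +1` if some shortest `u v`-path is positive, `-1` otherwise. -/
noncomputable def sigmaMax {V : Type*} (G : SimpleGraph V) (σ : V → V → ℤ) (u v : V) : ℤ :=
  if ∃ p : G.Walk u v, IsShortestPath p ∧ walkSign σ p = 1 then 1 else -1

open scoped Classical in
/-- `σmin u v = +1` if all shortest `u v`-paths are positive, `-1` otherwise. -/
noncomputable def sigmaMin {V : Type*} (G : SimpleGraph V) (σ : V → V → ℤ) (u v : V) : ℤ :=
  if ∀ p : G.Walk u v, IsShortestPath p → walkSign σ p = 1 then 1 else -1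

/-- The signed distance matrix `D^max`, with `(u,v)` entry `σmax(u,v)·d(u,v)`. -/
noncomputable def Dmax {V : Type*} (G : SimpleGraph V) (σ : V → V → ℤ) : Matrix V V ℝ :=
  Matrix.of fun u v => (sigmaMax G σ u v : ℝ) * (G.dist u v : ℝ)

/-- The signed distance matrix `D^min`, with `(u,v)` entry `σmin(u,v)·d(u,v)`. -/
noncomputable def Dmin {V : Type*} (G : SimpleGraph V) (σ : V → V → ℤ) : Matrix V V ℝ :=
  Matrix.of fun u v => (sigmaMin G σ u v : ℝ) * (G.dist u v : ℝ)

/-- Two vertices are distance-compatible if all shortest paths between them have the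
same sign. -/
def Compatible {V : Type*} (G : SimpleGraph V) (σ : V → V → ℤ) (u v : V) : Prop :=
  ∀ p q : G.Walk u v, IsShortestPath p → IsShortestPath q → walkSign σ p = walkSign σ q

/-- A signed graph is distance-compatible if every pair of vertices is
distance-compatible. -/
def IsCompatibleGraph {V : Type*} (G : SimpleGraph V) (σ : V → V → ℤ) : Prop :=
  ∀ u v, Compatible G σ u v

/-- The largest eigenvalue of a (symmetric) real matrix: the supremum of the set of real
roots of its characteristic polynomial. -/
noncomputable def largestEigenvalue {n : Type*} [Fintype n] [DecidableEq n]
    (M : Matrix n n ℝ) : ℝ :=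
  sSup {x : ℝ | M.charpoly.IsRoot x}

/-!
By Harary's theorem a connected signed graph is balanced iff it is switching equivalent to the
all-positive graph: `σ u v = θ u * θ v` on edges for some `θ : V → {±1}`. Switching conjugates
`A(Σ,w)` by the involution `diag θ`, so it preserves the characteristic polynomial.

Conversely, let `y` be an eigenvector of `A(Σ,w)` for its largest eigenvalue. Entrywise
`yᵀ A(Σ,w) y ≤ |y|ᵀ A(G,w) |y| ≤ λ₁(A(G,w)) ‖y‖²`, so if the two largest eigenvalues agree, both
inequalities are equalities. Then `|y|` is a top eigenvector of `A(G,w)`, hence has no zero entry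
since the weights are positive and `G` is connected, and equality term by term forces
`σ u v = sign (y u) * sign (y v)`.
-/

open Matrix

namespace Matrix

theorem charpoly_mul_mul_eq_of_mul_eq_one {n R : Type*} [Fintype n] [DecidableEq n] [CommRing R]
    {P Q : Matrix n n R} (hQP : Q * P = 1) (M : Matrix n n R) :
    (P * M * Q).charpoly = M.charpoly := by
  rw [Matrix.mul_assoc, charpoly_mul_comm, Matrix.mul_assoc, hQP, Matrix.mul_one]

theorem dotProduct_mulVec_self_eq_sum {n : Type*} [Fintype n] (M : Matrix n n ℝ) (x : n → ℝ) :
    x ⬝ᵥ M *ᵥ x = ∑ u, ∑ v, x u * M u v * x v := by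
  simp only [dotProduct, mulVec, Finset.mul_sum, mul_assoc]

variable {n : Type*} [Fintype n] [DecidableEq n] {M : Matrix n n ℝ}

theorem largestEigenvalue_eq_sSup_spectrum (M : Matrix n n ℝ) :
    largestEigenvalue M = sSup (spectrum ℝ M) := by
  rw [largestEigenvalue]
  congr 1
  exact Set.ext fun μ => mem_spectrum_iff_isRoot_charpoly.symm

theorem algebraMap_sub_mulVec (c : ℝ) (M : Matrix n n ℝ) (x : n → ℝ) :
    (algebraMap ℝ (Matrix n n ℝ) c - M) *ᵥ x = c • x - M *ᵥ x := by
  rw [sub_mulVec, Algebra.algebraMap_eq_smul_one, smul_mulVec, one_mulVec]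

theorem le_largestEigenvalue {μ : ℝ} (hμ : μ ∈ spectrum ℝ M) : μ ≤ largestEigenvalue M := by
  rw [largestEigenvalue_eq_sSup_spectrum]
  exact le_csSup M.finite_real_spectrum.bddAbove hμ

theorem exists_mulVec_eq_smul_of_mem_spectrum {μ : ℝ} (hμ : μ ∈ spectrum ℝ M) :
    ∃ x ≠ 0, M *ᵥ x = μ • x := by
  rw [spectrum.mem_iff, isUnit_iff_isUnit_det, isUnit_iff_ne_zero, not_not,
    ← exists_mulVec_eq_zero_iff] at hμ
  obtain ⟨x, hx, hμx⟩ := hμ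
  refine ⟨x, hx, ?_⟩
  rw [algebraMap_sub_mulVec, sub_eq_zero] at hμx
  exact hμx.symm

namespace IsHermitian

theorem largestEigenvalue_mem_spectrum [Nonempty n] (hM : M.IsHermitian) :
    largestEigenvalue M ∈ spectrum ℝ M := by
  rw [largestEigenvalue_eq_sSup_spectrum]
  refine M.finite_real_spectrum.isCompact.sSup_mem ?_
  rw [hM.spectrum_real_eq_range_eigenvalues]
  exact Set.range_nonempty _

theorem posSemidef_algebraMap_largestEigenvalue_sub (hM : M.IsHermitian) :
    (algebraMap ℝ (Matrix n n ℝ) (largestEigenvalue M) - M).PosSemidef := by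
  refine posSemidef_iff_isHermitian_and_spectrum_nonneg.mpr ⟨?_, ?_⟩
  · exact (isHermitian_diagonal _).sub hM
  · rw [← spectrum.singleton_sub_eq]
    rintro _ ⟨_, rfl, μ, hμ, rfl⟩
    exact sub_nonneg.mpr (le_largestEigenvalue hμ)

theorem dotProduct_mulVec_le (hM : M.IsHermitian) (x : n → ℝ) :
    x ⬝ᵥ M *ᵥ x ≤ largestEigenvalue M * (x ⬝ᵥ x) := by
  have := hM.posSemidef_algebraMap_largestEigenvalue_sub.dotProduct_mulVec_nonneg x
  rw [star_trivial, algebraMap_sub_mulVec, dotProduct_sub, dotProduct_smul, smul_eq_mul] at this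
  linarith

theorem mulVec_eq_of_dotProduct_mulVec_eq (hM : M.IsHermitian) {x : n → ℝ}
    (hx : x ⬝ᵥ M *ᵥ x = largestEigenvalue M * (x ⬝ᵥ x)) :
    M *ᵥ x = largestEigenvalue M • x := by
  have := (hM.posSemidef_algebraMap_largestEigenvalue_sub.dotProduct_mulVec_zero_iff x).mp (by
    rw [star_trivial, algebraMap_sub_mulVec, dotProduct_sub, dotProduct_smul, smul_eq_mul, hx,
      sub_self])
  rwa [algebraMap_sub_mulVec, sub_eq_zero, eq_comm] at this

end IsHermitian

end Matrix

namespace SimpleGraph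

variable {V : Type*} {G : SimpleGraph V} {σ : V → V → ℤ}

@[simp] theorem walkSign_nil {u : V} : walkSign σ (Walk.nil : G.Walk u u) = 1 := rfl

@[simp] theorem walkSign_cons {u v w : V} (h : G.Adj u v) (p : G.Walk v w) :
    walkSign σ (Walk.cons h p) = σ u v * walkSign σ p := by
  simp [walkSign]

@[simp] theorem walkSign_append {u v w : V} (p : G.Walk u v) (q : G.Walk v w) :
    walkSign σ (p.append q) = walkSign σ p * walkSign σ q := by
  simp [walkSign, Walk.darts_append]

theorem walkSign_reverse (hσ : ∀ u v, σ u v = σ v u) {u v : V} (p : G.Walk u v) :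
    walkSign σ p.reverse = walkSign σ p := by
  induction p with
  | nil => rfl
  | cons h p ih => simp [ih, hσ _ _, mul_comm]

theorem IsSignature.mul_self_eq_one (hσ : IsSignature G σ) {u v : V} (h : G.Adj u v) :
    σ u v * σ u v = 1 := by
  rcases hσ.2 u v h with h1 | h1 <;> simp [h1]

theorem IsSignature.walkSign_mul_self (hσ : IsSignature G σ) {u v : V} (p : G.Walk u v) :
    walkSign σ p * walkSign σ p = 1 := by
  induction p with
  | nil => rfl
  | cons h p ih =>
    rw [walkSign_cons, mul_mul_mul_comm, hσ.mul_self_eq_one h, ih, one_mul]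

namespace IsBalanced

variable (hσ : IsSignature G σ) (hb : IsBalanced G σ)
include hσ hb

theorem mul_walkSign_path_eq_one {u v : V} (h : G.Adj u v) {q : G.Walk v u} (hq : q.IsPath) :
    σ u v * walkSign σ q = 1 := by
  by_cases he : s(u, v) ∈ q.edges
  · -- a path from `v` to `u` through the edge `uv` is that edge
    cases q with
    | nil => exact absurd h G.irrefl
    | @cons _ x _ h' p =>
      rcases List.mem_cons.mp he with he | he
      · obtain rfl : x = u := by
          rcases Sym2.eq_iff.mp he with ⟨rfl, -⟩ | ⟨rfl, -⟩
          exacts [absurd h G.irrefl, rfl]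
        obtain rfl := (Walk.isPath_iff_nil.mp hq.of_cons).eq_nil
        rw [walkSign_cons, walkSign_nil, mul_one, hσ.1 v, hσ.mul_self_eq_one h]
      · exact absurd (p.snd_mem_support_of_mem_edges he) (Walk.cons_isPath_iff _ _ |>.mp hq).2
  · rw [← walkSign_cons h]
    exact hb _ _ (Path.cons_isCycle ⟨q, hq⟩ h he)

theorem walkSign_bypass [DecidableEq V] {u v : V} (p : G.Walk u v) :
    walkSign σ p.bypass = walkSign σ p := by
  induction p with
  | nil => rfl
  | @cons u v w h p ih =>
    simp only [Walk.bypass]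
    split_ifs with hu
    · have hpath : (p.bypass.takeUntil u hu).IsPath := (p.bypass_isPath).takeUntil hu
      rw [walkSign_cons, ← ih, ← congrArg (walkSign σ) (p.bypass.take_spec hu), walkSign_append,
        ← mul_assoc, mul_walkSign_path_eq_one hσ hb h hpath, one_mul]
    · rw [walkSign_cons, walkSign_cons, ih]

theorem walkSign_eq_one_of_closed {u : V} (c : G.Walk u u) : walkSign σ c = 1 := by
  classical
  rw [← walkSign_bypass hσ hb, (Walk.isPath_iff_nil.mp c.bypass_isPath).eq_nil, walkSign_nil]

theorem walkSign_eq {u v : V} (p q : G.Walk u v) : walkSign σ p = walkSign σ q := by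
  have h := walkSign_eq_one_of_closed hσ hb (p.append q.reverse)
  rw [walkSign_append, walkSign_reverse hσ.1] at h
  linear_combination walkSign σ q * h - walkSign σ p * hσ.walkSign_mul_self q

end IsBalanced

theorem walkSign_eq_mul_of_switching {θ : V → ℤ} (hθ : ∀ v, θ v * θ v = 1)
    (hsw : ∀ u v, G.Adj u v → σ u v = θ u * θ v) {u v : V} (p : G.Walk u v) :
    walkSign σ p = θ u * θ v := by
  induction p with
  | nil => exact (hθ _).symm
  | @cons a b c h p ih =>
    rw [walkSign_cons, ih, hsw _ _ h]
    linear_combination θ a * θ c * hθ b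

theorem isBalanced_iff_exists_switching (hσ : IsSignature G σ) (hG : G.Connected) :
    IsBalanced G σ ↔
      ∃ θ : V → ℤ, (∀ v, θ v * θ v = 1) ∧ ∀ u v, G.Adj u v → σ u v = θ u * θ v := by
  constructor
  · intro hb
    obtain ⟨r⟩ := hG.nonempty
    let θ v := walkSign σ (hG.preconnected r v).some
    have hθ v : θ v * θ v = 1 := hσ.walkSign_mul_self _
    refine ⟨θ, hθ, fun u v h => ?_⟩
    have hθv : θ v = θ u * σ u v := by
      simpa using hb.walkSign_eq hσ (hG.preconnected r v).some
        ((hG.preconnected r u).some.append (.cons h .nil))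
    linear_combination -θ u * hθv - σ u v * hθ u
  · rintro ⟨θ, hθ, hsw⟩ u p -
    rw [walkSign_eq_mul_of_switching hθ hsw, hθ]

end SimpleGraph

namespace SimpleGraph

variable {V : Type*} (G : SimpleGraph V) [DecidableRel G.Adj]

/-- The paper's `A(G,w)`; the signed `A(Σ,w)` is `G.weightedAdjMatrix fun u v => σ u v * w u v`. -/
def weightedAdjMatrix (w : V → V → ℝ) : Matrix V V ℝ :=
  Matrix.of fun u v => if G.Adj u v then w u v else 0

variable {G} {σ : V → V → ℤ} {w : V → V → ℝ}

theorem weightedAdjMatrix_apply (u v : V) :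
    G.weightedAdjMatrix w u v = if G.Adj u v then w u v else 0 := rfl

theorem isHermitian_weightedAdjMatrix (hw : ∀ u v, w u v = w v u) :
    (G.weightedAdjMatrix w).IsHermitian := by
  ext u v
  simp [weightedAdjMatrix_apply, G.adj_comm u v, hw u v]

theorem mul_weightedAdjMatrix_mul_le_abs (hσ : IsSignature G σ)
    (hw : ∀ u v, G.Adj u v → 0 ≤ w u v) (y : V → ℝ) (u v : V) :
    y u * G.weightedAdjMatrix (fun u v => σ u v * w u v) u v * y v ≤
      |y u| * G.weightedAdjMatrix w u v * |y v| := by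
  simp only [weightedAdjMatrix_apply]
  split_ifs with h
  · have hσy : σ u v * (y u * y v) ≤ |y u * y v| := by
      rcases hσ.2 u v h with h1 | h1 <;>
        simp only [h1, Int.cast_one, Int.cast_neg, one_mul, neg_one_mul]
      exacts [le_abs_self _, neg_le_abs _]
    calc y u * (σ u v * w u v) * y v = w u v * (σ u v * (y u * y v)) := by ring
      _ ≤ w u v * |y u * y v| := mul_le_mul_of_nonneg_left hσy (hw u v h)
      _ = |y u| * w u v * |y v| := by rw [abs_mul]; ring
  · simp

variable [Fintype V]

theorem weightedAdjMatrix_eq_diagonal_mul_mul_diagonal [DecidableEq V] {θ : V → ℤ}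
    (hsw : ∀ u v, G.Adj u v → σ u v = θ u * θ v) :
    G.weightedAdjMatrix (fun u v => σ u v * w u v) =
      Matrix.diagonal (fun v => (θ v : ℝ)) * G.weightedAdjMatrix w *
        Matrix.diagonal (fun v => (θ v : ℝ)) := by
  ext u v
  rw [Matrix.mul_diagonal, Matrix.diagonal_mul, weightedAdjMatrix_apply, weightedAdjMatrix_apply]
  split_ifs with h
  · rw [hsw u v h]
    push_cast
    ring
  · simp

theorem dotProduct_mulVec_le_abs (hσ : IsSignature G σ) (hw : ∀ u v, G.Adj u v → 0 ≤ w u v)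
    (y : V → ℝ) :
    y ⬝ᵥ G.weightedAdjMatrix (fun u v => σ u v * w u v) *ᵥ y ≤
      |y| ⬝ᵥ G.weightedAdjMatrix w *ᵥ |y| := by
  simp only [Matrix.dotProduct_mulVec_self_eq_sum, Pi.abs_apply]
  exact Finset.sum_le_sum fun u _ => Finset.sum_le_sum fun v _ =>
    mul_weightedAdjMatrix_mul_le_abs hσ hw y u v

theorem eq_sign_mul_sign_of_dotProduct_mulVec_eq (hσ : IsSignature G σ)
    (hw : ∀ u v, G.Adj u v → 0 < w u v) {y : V → ℝ} (hy : ∀ v, y v ≠ 0)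
    (heq : y ⬝ᵥ G.weightedAdjMatrix (fun u v => σ u v * w u v) *ᵥ y =
      |y| ⬝ᵥ G.weightedAdjMatrix w *ᵥ |y|) {u v : V} (h : G.Adj u v) :
    σ u v = (SignType.sign (y u) : ℤ) * (SignType.sign (y v) : ℤ) := by
  have hle := mul_weightedAdjMatrix_mul_le_abs hσ (fun u v h => (hw u v h).le) y
  simp only [Matrix.dotProduct_mulVec_self_eq_sum, Pi.abs_apply] at heq
  have hrow := (Finset.sum_eq_sum_iff_of_le fun u _ => Finset.sum_le_sum fun v _ => hle u v).mp
    heq u (Finset.mem_univ u)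
  have huv := (Finset.sum_eq_sum_iff_of_le fun v _ => hle u v).mp hrow v (Finset.mem_univ v)
  simp only [weightedAdjMatrix_apply, if_pos h] at huv
  have hσy : (σ u v : ℝ) * (y u * y v) = SignType.sign (y u * y v) * (y u * y v) := by
    rw [sign_mul_self, abs_mul]
    apply mul_left_cancel₀ (hw u v h).ne'
    linear_combination huv
  have := mul_right_cancel₀ (mul_ne_zero (hy u) (hy v)) hσy
  rw [sign_mul] at this
  exact_mod_cast this

theorem pos_of_weightedAdjMatrix_mulVec_eq_smul (hG : G.Connected)
    (hw : ∀ u v, G.Adj u v → 0 < w u v) {z : V → ℝ} (hz : 0 ≤ z) (hz0 : z ≠ 0) {c : ℝ}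
    (hc : G.weightedAdjMatrix w *ᵥ z = c • z) (v : V) : 0 < z v := by
  have hadj {a b : V} (h : G.Adj a b) (ha : z a = 0) : z b = 0 := by
    have hrow : ∑ x, G.weightedAdjMatrix w a x * z x = 0 := by
      simpa [ha, Matrix.mulVec, dotProduct] using congrFun hc a
    have hnn x : 0 ≤ G.weightedAdjMatrix w a x * z x := by
      refine mul_nonneg ?_ (hz x)
      rw [weightedAdjMatrix_apply]
      split_ifs with h'
      exacts [(hw a x h').le, le_rfl]
    have := (Finset.sum_eq_zero_iff_of_nonneg fun x _ => hnn x).mp hrow b (Finset.mem_univ b)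
    rw [weightedAdjMatrix_apply, if_pos h] at this
    exact (mul_eq_zero.mp this).resolve_left (hw a b h).ne'
  have hwalk {a b : V} (p : G.Walk a b) (ha : z a = 0) : z b = 0 := by
    induction p with
    | nil => exact ha
    | cons h _ ih => exact ih (hadj h ha)
  refine (hz v).lt_of_ne fun hv => hz0 (funext fun u => ?_)
  exact hwalk (hG.preconnected v u).some hv.symm

variable [DecidableEq V]

theorem largestEigenvalue_weightedAdjMatrix_eq_of_switching {θ : V → ℤ}
    (hθ : ∀ v, θ v * θ v = 1) (hsw : ∀ u v, G.Adj u v → σ u v = θ u * θ v) :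
    largestEigenvalue (G.weightedAdjMatrix fun u v => σ u v * w u v) =
      largestEigenvalue (G.weightedAdjMatrix w) := by
  have hD : Matrix.diagonal (fun v => (θ v : ℝ)) * Matrix.diagonal (fun v => (θ v : ℝ)) = 1 := by
    rw [Matrix.diagonal_mul_diagonal, ← Matrix.diagonal_one]
    exact congrArg Matrix.diagonal (funext fun v => by exact_mod_cast hθ v)
  rw [weightedAdjMatrix_eq_diagonal_mul_mul_diagonal hsw, largestEigenvalue, largestEigenvalue,
    Matrix.charpoly_mul_mul_eq_of_mul_eq_one hD]

theorem exists_switching_of_largestEigenvalue_eq (hσ : IsSignature G σ) (hG : G.Connected)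
    (hwsym : ∀ u v, w u v = w v u) (hwpos : ∀ u v, G.Adj u v → 0 < w u v)
    (heq : largestEigenvalue (G.weightedAdjMatrix fun u v => σ u v * w u v) =
      largestEigenvalue (G.weightedAdjMatrix w)) :
    ∃ θ : V → ℤ, (∀ v, θ v * θ v = 1) ∧ ∀ u v, G.Adj u v → σ u v = θ u * θ v := by
  have : Nonempty V := hG.nonempty
  set A := G.weightedAdjMatrix w
  set Aσ := G.weightedAdjMatrix fun u v => σ u v * w u v
  have hA : A.IsHermitian := isHermitian_weightedAdjMatrix hwsym
  have hAσ : Aσ.IsHermitian := isHermitian_weightedAdjMatrix fun u v => by rw [hσ.1, hwsym]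
  obtain ⟨y, hy0, hy⟩ := Matrix.exists_mulVec_eq_smul_of_mem_spectrum
    hAσ.largestEigenvalue_mem_spectrum
  have hle : y ⬝ᵥ Aσ *ᵥ y ≤ |y| ⬝ᵥ A *ᵥ |y| :=
    dotProduct_mulVec_le_abs hσ (fun u v h => (hwpos u v h).le) y
  have hyy : y ⬝ᵥ Aσ *ᵥ y = largestEigenvalue A * (|y| ⬝ᵥ |y|) := by
    rw [hy, dotProduct_smul, smul_eq_mul, heq]
    congr 1
    simp only [dotProduct, Pi.abs_apply, abs_mul_abs_self]
  have htop : |y| ⬝ᵥ A *ᵥ |y| = largestEigenvalue A * (|y| ⬝ᵥ |y|) :=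
    le_antisymm (hA.dotProduct_mulVec_le _) (hyy ▸ hle)
  have hpos := pos_of_weightedAdjMatrix_mulVec_eq_smul hG hwpos (abs_nonneg y)
    (fun h => hy0 (funext fun v => abs_eq_zero.mp (congrFun h v)))
    (hA.mulVec_eq_of_dotProduct_mulVec_eq htop)
  have hy_ne v : y v ≠ 0 := abs_pos.mp (hpos v)
  refine ⟨fun v => SignType.sign (y v), fun v => ?_, fun u v h =>
    eq_sign_mul_sign_of_dotProduct_mulVec_eq hσ hwpos hy_ne (le_antisymm hle (hyy ▸ htop.le)) h⟩
  rcases (hy_ne v).lt_or_gt with h | h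
  · simp [sign_neg h]
  · simp [sign_pos h]

end SimpleGraph

/-- Stanić's spectral criterion, weighted form. For a signed graph
`(G, σ)` with connected underlying simple graph and a positive edge-weight function `w`,
the signed graph is balanced if and only if the largest eigenvalues of `A(Σ,w)` and
`A(G,w)` coincide. -/
theorem balanced_iff_largestEigenvalue_eq {V : Type*} [Fintype V] [DecidableEq V]
    (G : SimpleGraph V) [DecidableRel G.Adj] (σ : V → V → ℤ) (w : V → V → ℝ)
    (hσ : IsSignature G σ) (hG : G.Connected)
    (hwsym : ∀ u v, w u v = w v u) (hwpos : ∀ u v, G.Adj u v → 0 < w u v) :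
    IsBalanced G σ ↔
      largestEigenvalue (Matrix.of fun u v => if G.Adj u v then (σ u v : ℝ) * w u v else 0) =
        largestEigenvalue (Matrix.of fun u v => if G.Adj u v then w u v else 0) := by
  change IsBalanced G σ ↔ largestEigenvalue (G.weightedAdjMatrix fun u v => σ u v * w u v) =
    largestEigenvalue (G.weightedAdjMatrix w)
  rw [isBalanced_iff_exists_switching hσ hG]
  exact ⟨fun ⟨_, hθ, hsw⟩ => largestEigenvalue_weightedAdjMatrix_eq_of_switching hθ hsw,
    exists_switching_of_largestEigenvalue_eq hσ hG hwsym hwpos⟩
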